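/- Let γ > 0 and α > 0. For μ > 0 set κ₊ = sqrt( sqrt(μ⁴ + γ⁴/4) + γ²/2 ), κ₋ = sqrt( sqrt(μ⁴ + γ⁴/4) − γ²/2 ), and let A_μ be the 4×4 complex matrix with rows ( e^{−κ₊π}, 1, 1, 1 ), ( 1, e^{−κ₊π}, e^{iκ₋π}, e^{−iκ₋π} ), ( (ακ₊−1)e^{−κ₊π}, ακ₊+1, −ακ₋−i, −ακ₋+i ), ( ακ₊+1, (ακ₊−1)e^{−κ₊π}, (−ακ₋+i)e^{iκ₋π}, (−ακ₋−i)e^{−iκ₋π} ). Then there exist C > 0 and μ₀ > 0 such that |det A_μ − 8i·α²·μ²·sin(μπ)| ≤ C·μ for all μ ≥ μ₀. -/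

import Mathlib

/-!
Write `S = √(μ⁴ + γ⁴/4)`, so that `κ₊² = S + γ²/2`, `κ₋² = S − γ²/2` and `κ₊κ₋ = μ²`. Expanding the
determinant, every term except `(ακ₊ + ακ₋)² (e^{iκ₋π} − e^{−iκ₋π})` is `O(μ)`: the exponentials
`e^{±iκ₋π}` have modulus one, and `e^{−κ₊π}` is bounded and kills the growth of `κ₊`. The main term is
`2iα²(κ₊ + κ₋)² sin(κ₋π)`, and since `μ² ≤ S ≤ μ² + γ²/2` both `(κ₊ + κ₋)² − 4μ²` and `μ(μ − κ₋)`
stay bounded; as `sin` is `1`-Lipschitz, this replaces it by `8iα²μ² sin(μπ)` up to `O(μ)`.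
-/

open Real Complex

noncomputable def kappaP (γ μ : ℝ) : ℝ :=
  Real.sqrt (Real.sqrt (μ ^ 4 + γ ^ 4 / 4) + γ ^ 2 / 2)

noncomputable def kappaM (γ μ : ℝ) : ℝ :=
  Real.sqrt (Real.sqrt (μ ^ 4 + γ ^ 4 / 4) - γ ^ 2 / 2)

/-- The matrix encoding the boundary conditions imposed on the general solution
of the eigenvalue equation for `L̄ = −∂t⁴ + γ²∂t²` on `[0,π]`. -/
noncomputable def Amat (γ α μ : ℝ) : Matrix (Fin 4) (Fin 4) ℂ :=
  let κp := kappaP γ μ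
  let κm := kappaM γ μ
  !![((Real.exp (-κp * π) : ℝ) : ℂ), 1, 1, 1;
     1, ((Real.exp (-κp * π) : ℝ) : ℂ),
       Complex.exp (Complex.I * ((κm * π : ℝ) : ℂ)),
       Complex.exp (-Complex.I * ((κm * π : ℝ) : ℂ));
     (((α * κp - 1) * Real.exp (-κp * π) : ℝ) : ℂ), ((α * κp + 1 : ℝ) : ℂ),
       -((α * κm : ℝ) : ℂ) - Complex.I, -((α * κm : ℝ) : ℂ) + Complex.I;
     ((α * κp + 1 : ℝ) : ℂ), (((α * κp - 1) * Real.exp (-κp * π) : ℝ) : ℂ),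
       (-((α * κm : ℝ) : ℂ) + Complex.I) * Complex.exp (Complex.I * ((κm * π : ℝ) : ℂ)),
       (-((α * κm : ℝ) : ℂ) - Complex.I) * Complex.exp (-Complex.I * ((κm * π : ℝ) : ℂ))]

section Kappa

variable (γ μ : ℝ)

lemma sq_le_sqrt_quartic : μ ^ 2 ≤ √(μ ^ 4 + γ ^ 4 / 4) :=
  Real.le_sqrt_of_sq_le (by nlinarith [sq_nonneg γ, sq_nonneg (γ ^ 2)])

lemma half_sq_le_sqrt_quartic : γ ^ 2 / 2 ≤ √(μ ^ 4 + γ ^ 4 / 4) :=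
  Real.le_sqrt_of_sq_le (by nlinarith [sq_nonneg μ, sq_nonneg (μ ^ 2)])

lemma sqrt_quartic_le : √(μ ^ 4 + γ ^ 4 / 4) ≤ μ ^ 2 + γ ^ 2 / 2 :=
  Real.sqrt_le_iff.mpr ⟨by positivity, by nlinarith [sq_nonneg μ, sq_nonneg γ]⟩

lemma kappaP_sq : kappaP γ μ ^ 2 = √(μ ^ 4 + γ ^ 4 / 4) + γ ^ 2 / 2 :=
  Real.sq_sqrt (by positivity)

lemma kappaM_sq : kappaM γ μ ^ 2 = √(μ ^ 4 + γ ^ 4 / 4) - γ ^ 2 / 2 :=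
  Real.sq_sqrt (by linarith [half_sq_le_sqrt_quartic γ μ])

lemma kappaM_le_kappaP : kappaM γ μ ≤ kappaP γ μ :=
  Real.sqrt_le_sqrt (by linarith [sq_nonneg γ])

lemma kappaP_mul_kappaM : kappaP γ μ * kappaM γ μ = μ ^ 2 := by
  rw [kappaP, kappaM, ← Real.sqrt_mul (by positivity), ← Real.sqrt_sq (sq_nonneg μ)]
  congr 1
  linear_combination Real.sq_sqrt (by positivity : 0 ≤ μ ^ 4 + γ ^ 4 / 4)

lemma sq_kappaP_add_kappaM :
    (kappaP γ μ + kappaM γ μ) ^ 2 = 2 * (√(μ ^ 4 + γ ^ 4 / 4) + μ ^ 2) := by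
  linear_combination kappaP_sq γ μ + kappaM_sq γ μ + 2 * kappaP_mul_kappaM γ μ

lemma kappaP_le (hγ : 0 ≤ γ) (hμ : 0 ≤ μ) : kappaP γ μ ≤ μ + γ :=
  Real.sqrt_le_iff.mpr ⟨add_nonneg hμ hγ, by nlinarith [sqrt_quartic_le γ μ, mul_nonneg hμ hγ]⟩

lemma kappaM_le (hμ : 0 ≤ μ) : kappaM γ μ ≤ μ :=
  Real.sqrt_le_iff.mpr ⟨hμ, by linarith [sqrt_quartic_le γ μ]⟩

lemma sub_kappaM_mul_le (hμ : 0 ≤ μ) : (μ - kappaM γ μ) * μ ≤ γ ^ 2 / 2 := by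
  have hκ : 0 ≤ kappaM γ μ := Real.sqrt_nonneg _
  nlinarith [kappaM_sq γ μ, sq_le_sqrt_quartic γ μ, kappaM_le γ μ hμ]

end Kappa

lemma abs_sq_kappa_mul_sin_sub_le {γ μ : ℝ} (hμ : 0 ≤ μ) :
    |(kappaP γ μ + kappaM γ μ) ^ 2 * Real.sin (kappaM γ μ * π) - 4 * μ ^ 2 * Real.sin (μ * π)|
      ≤ γ ^ 2 + 2 * π * γ ^ 2 * μ := by
  have hsq_lo : 0 ≤ (kappaP γ μ + kappaM γ μ) ^ 2 - 4 * μ ^ 2 := by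
    linarith [sq_kappaP_add_kappaM γ μ, sq_le_sqrt_quartic γ μ]
  have hsq_hi : (kappaP γ μ + kappaM γ μ) ^ 2 - 4 * μ ^ 2 ≤ γ ^ 2 := by
    linarith [sq_kappaP_add_kappaM γ μ, sqrt_quartic_le γ μ]
  have hgap := mul_le_mul_of_nonneg_left (sub_kappaM_mul_le γ μ hμ) (by positivity : 0 ≤ 4 * π * μ)
  have hsin : |Real.sin (kappaM γ μ * π) - Real.sin (μ * π)| ≤ π * (μ - kappaM γ μ) := by
    refine (Real.abs_sin_sub_sin_le _ _).trans_eq ?_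
    rw [← sub_mul, abs_mul, abs_of_nonpos (by linarith [kappaM_le γ μ hμ]), abs_of_pos pi_pos]
    ring
  set κs := kappaP γ μ + kappaM γ μ
  calc _ = |(κs ^ 2 - 4 * μ ^ 2) * Real.sin (kappaM γ μ * π)
          + 4 * μ ^ 2 * (Real.sin (kappaM γ μ * π) - Real.sin (μ * π))| := by ring_nf
    _ ≤ (κs ^ 2 - 4 * μ ^ 2) * 1 + 4 * μ ^ 2 * (π * (μ - kappaM γ μ)) := by
      refine (abs_add_le _ _).trans (add_le_add ?_ ?_) <;> rw [abs_mul]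
      · rw [abs_of_nonneg hsq_lo]
        exact mul_le_mul_of_nonneg_left (Real.abs_sin_le_one _) hsq_lo
      · rw [abs_of_nonneg (by positivity)]
        exact mul_le_mul_of_nonneg_left hsin (by positivity)
    _ ≤ γ ^ 2 + 2 * π * γ ^ 2 * μ := by linarith

lemma mul_exp_neg_mul_pi_le_one {x : ℝ} (hx : 0 ≤ x) : x * Real.exp (-x * π) ≤ 1 :=
  calc x * Real.exp (-x * π) ≤ x * Real.exp (-x) := by
        gcongr
        nlinarith [pi_gt_three]
    _ ≤ Real.exp (-1) := Real.mul_exp_neg_le_exp_neg_one x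
    _ ≤ 1 := Real.exp_le_one_iff.mpr (by norm_num)

lemma exp_I_mul_sub_exp_neg_I_mul (x : ℝ) :
    Complex.exp (Complex.I * x) - Complex.exp (-Complex.I * x) = 2 * Complex.I * Real.sin x := by
  rw [Complex.ofReal_sin, Complex.sin]
  ring_nf
  rw [Complex.I_sq]
  ring_nf

/-- The pattern of `Amat`, with `p = e^{-κ₊π}`, `e = e^{iκ₋π}`, `f = e^{-iκ₋π}`, `a = ακ₊`, `b = ακ₋`. -/
def bcMatrix (p e f a b : ℂ) : Matrix (Fin 4) (Fin 4) ℂ :=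
  !![p, 1, 1, 1;
     1, p, e, f;
     (a - 1) * p, a + 1, -b - I, -b + I;
     a + 1, (a - 1) * p, (-b + I) * e, (-b - I) * f]

lemma det_bcMatrix (p e f a b : ℂ) :
    (bcMatrix p e f a b).det = (a + b) ^ 2 * (e - f)
      + (p ^ 2 * (a + b) ^ 2 * (f - e) - 2 * I * (1 + p ^ 2) * (e + f)
        + 2 * (a + b) * (e - f - I * (e + f)) + 2 * p ^ 2 * (a + b) * (e - f + I * (e + f))
        + 4 * p * I * (1 + e * f)) := by
  simp [bcMatrix, Matrix.det_succ_row_zero, Fin.sum_univ_succ, Fin.succAbove]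
  linear_combination (1 - p ^ 2) * (e - f) * Complex.I_sq

lemma norm_det_bcMatrix_sub_le {p e f a b : ℂ} {c : ℝ} (he : ‖e‖ = 1) (hf : ‖f‖ = 1)
    (hp : ‖p‖ ≤ 1) (hc : ‖p * (a + b)‖ ≤ c) :
    ‖(bcMatrix p e f a b).det - (a + b) ^ 2 * (e - f)‖ ≤ 2 * c ^ 2 + 8 * c + 8 * ‖a + b‖ + 16 := by
  set s := a + b
  have hsub : ‖e - f‖ ≤ 2 := (norm_sub_le e f).trans (by rw [he, hf]; norm_num)
  have hadd : ‖e + f‖ ≤ 2 := (norm_add_le e f).trans (by rw [he, hf]; norm_num)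
  have hsub' : ‖f - e‖ ≤ 2 := by rwa [norm_sub_rev]
  have hX : ‖e - f - I * (e + f)‖ ≤ 4 :=
    (norm_sub_le _ _).trans (by rw [norm_mul, Complex.norm_I, one_mul]; linarith)
  have hY : ‖e - f + I * (e + f)‖ ≤ 4 :=
    (norm_add_le _ _).trans (by rw [norm_mul, Complex.norm_I, one_mul]; linarith)
  have h1p : ‖1 + p ^ 2‖ ≤ 2 :=
    (norm_add_le _ _).trans (by rw [norm_one, norm_pow]; nlinarith [norm_nonneg p])
  have h1ef : ‖1 + e * f‖ ≤ 2 :=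
    (norm_add_le _ _).trans (by rw [norm_one, norm_mul, he, hf]; norm_num)
  have hc0 : 0 ≤ c := (norm_nonneg _).trans hc
  have t1 : ‖p ^ 2 * s ^ 2 * (f - e)‖ ≤ 2 * c ^ 2 := by
    rw [← mul_pow, norm_mul, norm_pow, mul_comm]
    gcongr
  have t2 : ‖2 * I * (1 + p ^ 2) * (e + f)‖ ≤ 8 := by
    rw [norm_mul, norm_mul, norm_mul, Complex.norm_I, Complex.norm_two]
    nlinarith [norm_nonneg (1 + p ^ 2), norm_nonneg (e + f)]
  have t3 : ‖2 * s * (e - f - I * (e + f))‖ ≤ 8 * ‖s‖ := by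
    rw [norm_mul, norm_mul, Complex.norm_two]
    nlinarith [norm_nonneg s]
  have t4 : ‖2 * p ^ 2 * s * (e - f + I * (e + f))‖ ≤ 8 * c := by
    rw [show 2 * p ^ 2 * s = 2 * p * (p * s) by ring, norm_mul, norm_mul, norm_mul,
      Complex.norm_two]
    have := mul_le_mul hp hc (norm_nonneg _) zero_le_one
    nlinarith [norm_nonneg (e - f + I * (e + f)), norm_nonneg p, norm_nonneg (p * s)]
  have t5 : ‖4 * p * I * (1 + e * f)‖ ≤ 8 := by
    rw [norm_mul, norm_mul, norm_mul, Complex.norm_I, show ‖(4 : ℂ)‖ = 4 by norm_num]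
    nlinarith [norm_nonneg p, norm_nonneg (1 + e * f)]
  rw [det_bcMatrix, add_sub_cancel_left]
  set u₁ := p ^ 2 * s ^ 2 * (f - e)
  set u₂ := 2 * I * (1 + p ^ 2) * (e + f)
  set u₃ := 2 * s * (e - f - I * (e + f))
  set u₄ := 2 * p ^ 2 * s * (e - f + I * (e + f))
  linarith [norm_add_le (u₁ - u₂ + u₃ + u₄) (4 * p * I * (1 + e * f)),
    norm_add_le (u₁ - u₂ + u₃) u₄, norm_add_le (u₁ - u₂) u₃, norm_sub_le u₁ u₂]

lemma Amat_eq_bcMatrix (γ α μ : ℝ) :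
    Amat γ α μ = bcMatrix (Real.exp (-kappaP γ μ * π))
      (Complex.exp (I * (kappaM γ μ * π : ℝ))) (Complex.exp (-I * (kappaM γ μ * π : ℝ)))
      (α * kappaP γ μ : ℝ) (α * kappaM γ μ : ℝ) := by
  ext i j
  fin_cases i <;> fin_cases j <;> simp [Amat, bcMatrix]

lemma exp_neg_kappaP_mul_le {γ α : ℝ} (hα : 0 ≤ α) (μ : ℝ) :
    Real.exp (-kappaP γ μ * π) * (α * (kappaP γ μ + kappaM γ μ)) ≤ 2 * α := by
  set κp := kappaP γ μ
  calc Real.exp (-κp * π) * (α * (κp + kappaM γ μ)) ≤ Real.exp (-κp * π) * (α * (κp + κp)) := by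
        gcongr
        exact kappaM_le_kappaP γ μ
    _ = 2 * α * (κp * Real.exp (-κp * π)) := by ring
    _ ≤ 2 * α := mul_le_of_le_one_right (by positivity)
        (mul_exp_neg_mul_pi_le_one (Real.sqrt_nonneg _))

lemma norm_det_Amat_sub_le {α : ℝ} (hα : 0 ≤ α) (γ μ : ℝ) :
    ‖(Amat γ α μ).det - ((α * (kappaP γ μ + kappaM γ μ) : ℝ) : ℂ) ^ 2
        * (Complex.exp (I * (kappaM γ μ * π : ℝ)) - Complex.exp (-I * (kappaM γ μ * π : ℝ)))‖
      ≤ 8 * α ^ 2 + 16 * α + 8 * (α * (kappaP γ μ + kappaM γ μ)) + 16 := by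
  set κp := kappaP γ μ
  set κm := kappaM γ μ
  have hκp : 0 ≤ κp := Real.sqrt_nonneg _
  have hκm : 0 ≤ κm := Real.sqrt_nonneg _
  have hs : ((α * κp : ℝ) : ℂ) + (α * κm : ℝ) = (α * (κp + κm) : ℝ) := by push_cast; ring
  have hp : ‖((Real.exp (-κp * π) : ℝ) : ℂ)‖ ≤ 1 := by
    rw [Complex.norm_real, Real.norm_of_nonneg (Real.exp_pos _).le, Real.exp_le_one_iff]
    nlinarith [pi_pos]
  have hps : ‖((Real.exp (-κp * π) : ℝ) : ℂ) * ((α * κp : ℝ) + (α * κm : ℝ))‖ ≤ 2 * α := by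
    rw [hs, ← Complex.ofReal_mul, Complex.norm_real, Real.norm_of_nonneg (by positivity)]
    exact exp_neg_kappaP_mul_le hα μ
  have hf : ‖Complex.exp (-I * (κm * π : ℝ))‖ = 1 := by rw [Complex.norm_exp]; simp
  have h := norm_det_bcMatrix_sub_le (Complex.norm_exp_I_mul_ofReal (κm * π)) hf hp hps
  rwa [← Amat_eq_bcMatrix, hs, Complex.norm_real, Real.norm_of_nonneg (by positivity),
    show 2 * (2 * α) ^ 2 + 8 * (2 * α) = 8 * α ^ 2 + 16 * α by ring] at h

lemma norm_main_term_sub_le (α : ℝ) {γ μ : ℝ} (hμ : 0 ≤ μ) :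
    ‖((α * (kappaP γ μ + kappaM γ μ) : ℝ) : ℂ) ^ 2
        * (Complex.exp (I * (kappaM γ μ * π : ℝ)) - Complex.exp (-I * (kappaM γ μ * π : ℝ)))
        - 8 * I * (α : ℂ) ^ 2 * (μ : ℂ) ^ 2 * ((Real.sin (μ * π) : ℝ) : ℂ)‖
      ≤ 2 * α ^ 2 * (γ ^ 2 + 2 * π * γ ^ 2 * μ) := by
  set κs := kappaP γ μ + kappaM γ μ
  rw [exp_I_mul_sub_exp_neg_I_mul, show ((α * κs : ℝ) : ℂ) ^ 2
      * (2 * I * (Real.sin (kappaM γ μ * π) : ℝ))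
      - 8 * I * (α : ℂ) ^ 2 * (μ : ℂ) ^ 2 * ((Real.sin (μ * π) : ℝ) : ℂ)
      = 2 * I * ((α ^ 2 * (κs ^ 2 * Real.sin (kappaM γ μ * π)
        - 4 * μ ^ 2 * Real.sin (μ * π)) : ℝ) : ℂ) by push_cast; ring,
    norm_mul, norm_mul, Complex.norm_I, Complex.norm_two, Complex.norm_real, Real.norm_eq_abs,
    abs_mul, abs_of_nonneg (sq_nonneg α), mul_one]
  linarith [mul_le_mul_of_nonneg_left (abs_sq_kappa_mul_sin_sub_le (γ := γ) hμ) (sq_nonneg α)]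

lemma exists_pos_le_mul_of_le_add_mul {g : ℝ → ℝ} {a b : ℝ} (ha : 0 ≤ a) (hb : 0 ≤ b)
    (h : ∀ μ ≥ 1, g μ ≤ a + b * μ) : ∃ C > 0, ∃ μ₀ > 0, ∀ μ ≥ μ₀, g μ ≤ C * μ :=
  ⟨a + b + 1, by positivity, 1, one_pos, fun μ hμ => by nlinarith [h μ hμ]⟩

/-- Determinant asymptotics: `det A_μ = 8i α² μ² sin(μπ) + O(μ)`. -/
theorem stmt13 (γ α : ℝ) (hγ : 0 < γ) (hα : 0 < α) :
    ∃ C > 0, ∃ μ₀ > 0, ∀ μ ≥ μ₀,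
      ‖(Amat γ α μ).det
          - 8 * Complex.I * (α : ℂ) ^ 2 * (μ : ℂ) ^ 2 * ((Real.sin (μ * π) : ℝ) : ℂ)‖
        ≤ C * μ := by
  refine exists_pos_le_mul_of_le_add_mul
    (a := 8 * α ^ 2 + 16 * α + 8 * α * γ + 16 + 2 * α ^ 2 * γ ^ 2)
    (b := 16 * α + 4 * π * α ^ 2 * γ ^ 2) (by positivity) (by positivity) fun μ hμ => ?_
  have hμ0 : 0 ≤ μ := zero_le_one.trans hμ
  have hκ : α * (kappaP γ μ + kappaM γ μ) ≤ α * (2 * μ + γ) :=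
    mul_le_mul_of_nonneg_left (by linarith [kappaP_le γ μ hγ.le hμ0, kappaM_le γ μ hμ0]) hα.le
  calc _ ≤ _ := norm_sub_le_norm_sub_add_norm_sub _ _ _
    _ ≤ _ := add_le_add (norm_det_Amat_sub_le hα.le γ μ) (norm_main_term_sub_le α hμ0)
    _ ≤ _ := by linarith
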